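/- In a finite tournament, the Smith set always exists and is unique: the family of nonempty dominant sets (sets S with every member of S beating every non-member) is totally ordered by inclusion, hence has a unique minimal element. -/

import Mathlib

def Dominant {V : Type*} (r : V → V → Prop) (S : Set V) : Prop :=
  S.Nonempty ∧ ∀ s ∈ S, ∀ v, v ∉ S → r s v

theorem Set.Finite.exists_isLeast_of_isChain {α : Type*} [PartialOrder α] {s : Set α}
    (hfin : s.Finite) (hne : s.Nonempty) (hchain : IsChain (· ≤ ·) s) : ∃ a, IsLeast s a := by
  obtain ⟨a, has, hmin⟩ := hfin.exists_minimal hne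
  exact ⟨a, has, fun b hb => (hchain.total has hb).elim id (hmin hb ·)⟩

theorem dominant_univ {V : Type*} [Nonempty V] (r : V → V → Prop) : Dominant r Set.univ :=
  ⟨Set.univ_nonempty, fun _ _ v hv => absurd (Set.mem_univ v) hv⟩

/-- Two incomparable dominant sets `S`, `T` would give `s ∈ S \ T` and `t ∈ T \ S` with both
`r s t` and `r t s`. -/
theorem isChain_dominant {V : Type*} (r : V → V → Prop)
    (hasymm : ∀ u v, u ≠ v → r u v → ¬ r v u) : IsChain (· ≤ ·) {S : Set V | Dominant r S} := by
  intro S hS T hT _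
  by_contra! hST
  obtain ⟨s, hsS, hsT⟩ := Set.not_subset.mp hST.1
  obtain ⟨t, htT, htS⟩ := Set.not_subset.mp hST.2
  have hne : s ≠ t := fun hst => hsT (hst ▸ htT)
  exact hasymm s t hne (hS.2 s hsS t htS) (hT.2 t htT s hsT)

theorem smith_set_exists_unique_general
    {V : Type*} [Fintype V] [Nonempty V] (r : V → V → Prop)
    (htour : ∀ u v, u ≠ v → (r u v ↔ ¬ r v u)) :
    (∀ S T : Set V, Dominant r S → Dominant r T → S ⊆ T ∨ T ⊆ S) ∧
    (∃! S : Set V, Dominant r S ∧ ∀ T : Set V, Dominant r T → S ⊆ T) := by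
  have hchain := isChain_dominant r fun u v huv => (htour u v huv).mp
  refine ⟨fun S T hS hT => hchain.total hS hT, ?_⟩
  obtain ⟨S, hS⟩ := (Set.toFinite {S : Set V | Dominant r S}).exists_isLeast_of_isChain
    ⟨Set.univ, dominant_univ r⟩ hchain
  exact ⟨S, hS, fun T hT => IsLeast.unique (s := {S : Set V | Dominant r S}) hT hS⟩

/-- In a finite tournament, the family of dominant sets is totally ordered by inclusion,
hence there is a unique minimal dominant set: the Smith set exists and is unique. -/
theorem smith_set_exists_unique
    {V : Type*} [Fintype V] [Nonempty V] (r : V → V → Prop)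
    (hirr : ∀ u, ¬ r u u)
    (htour : ∀ u v, u ≠ v → (r u v ↔ ¬ r v u)) :
    (∀ S T : Set V, Dominant r S → Dominant r T → S ⊆ T ∨ T ⊆ S) ∧
    (∃! S : Set V, Dominant r S ∧ ∀ T : Set V, Dominant r T → S ⊆ T) :=
  smith_set_exists_unique_general r htour
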